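/- Let m be a monomial of ℂ[x_n]. (1) If μ(m) is non-admissible for (𝓢_{n,k}, S_{n,k}) (resp. (𝓡_{n,k}, R_{n,k})), then m ∈ J_{n,k} (resp. m ∈ I_{n,k}), i.e. m = 0 in S_{n,k} (resp. R_{n,k}). (2) If μ(m) is semi-admissible, then m is congruent modulo J_{n,k} (resp. modulo I_{n,k}) to a ℂ-linear combination of monomials m_α with μ(m_α) ▷ μ(m). -/

import Mathlib

open scoped Classical
open MvPolynomial Finset

noncomputable section

/-- Nonempty subsets of `[n]`, the index set of the variables `y_S`. -/
abbrev NES (n : ℕ) := {S : Finset (Fin n) // S.Nonempty}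

/-- The polynomial ring `ℂ[y_S]`. -/
abbrev YRing (n : ℕ) := MvPolynomial (NES n) ℂ

/-- The polynomial ring `ℂ[x_1, …, x_n]`. -/
abbrev XRing (n : ℕ) := MvPolynomial (Fin n) ℂ

/-- The variable `y_F`, with junk value `1` when `F = ∅`. -/
def Yv {n : ℕ} (F : Finset (Fin n)) : YRing n :=
  if h : F.Nonempty then X ⟨F, h⟩ else 1

/-- `θ_i = Σ_{|S| = i} y_S^r`. -/
def theta (n r i : ℕ) : YRing n :=
  ∑ S ∈ univ.filter (fun S : NES n => S.1.card = i), X S ^ r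

/-- Stanley–Reisner generators `y_S y_T` for incomparable `S, T`. -/
def srSet (n : ℕ) : Set (YRing n) :=
  {p | ∃ S T : NES n, ¬ S.1 ⊆ T.1 ∧ ¬ T.1 ⊆ S.1 ∧ p = X S * X T}

/-- The generators `θ_{n-k+1}, …, θ_n`. -/
def thetaSet (n k r : ℕ) : Set (YRing n) :=
  {p | ∃ i : ℕ, n - k + 1 ≤ i ∧ i ≤ n ∧ p = theta n r i}

/-- Products `y_{S_1} ⋯ y_{S_m}` over multichains `S_1 ⊆ ⋯ ⊆ S_m` of length `m`. -/
def chainSet (n m : ℕ) : Set (YRing n) :=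
  {p | ∃ S : Fin m → NES n, (∀ i j : Fin m, i ≤ j → (S i).1 ⊆ (S j).1) ∧ p = ∏ i, X (S i)}

def SRideal (n : ℕ) : Ideal (YRing n) := Ideal.span (srSet n)

def STideal (n k r : ℕ) : Ideal (YRing n) := Ideal.span (srSet n ∪ thetaSet n k r)

/-- The ideal `𝓙_{n,k}`. -/
def Jideal (n k r : ℕ) : Ideal (YRing n) :=
  Ideal.span (srSet n ∪ thetaSet n k r ∪ chainSet n (k * r))

/-- The ideal `𝓘_{n,k}`. -/
def Iideal (n k r : ℕ) : Ideal (YRing n) :=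
  Ideal.span (srSet n ∪ thetaSet n k r ∪ chainSet n (k * r + 1))

/-- An `r`-colored word of length `m` on distinct letters from `[n]`. -/
structure CWord (n r m : ℕ) where
  letter : Fin m → Fin n
  inj : Function.Injective letter
  color : Fin m → Fin r

/-- `r`-colored permutations of `[n]`, i.e. the group `G(r,1,n)` as a set. -/
abbrev CPerm (n r : ℕ) := CWord n r n

/-- The order on colored letters: `(a,c) < (b,d)` iff `c > d`, or `c = d` and `a < b`. -/
def colLt {n r : ℕ} (a b : Fin n × Fin r) : Prop :=
  b.2 < a.2 ∨ (a.2 = b.2 ∧ a.1 < b.1)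

/-- The descent set of a colored word (0-indexed positions). -/
def DesSet {n r m : ℕ} (w : CWord n r m) : Finset (Fin m) :=
  univ.filter fun i => ∃ j : Fin m, (j : ℕ) = (i : ℕ) + 1 ∧
    colLt (w.letter j, w.color j) (w.letter i, w.color i)

def desNum {n r m : ℕ} (w : CWord n r m) : ℕ := (DesSet w).card

/-- `maj(w) = Σ colors + r · Σ_{i ∈ Des(w)} i` (1-based positions). -/
def majW {n r m : ℕ} (w : CWord n r m) : ℕ :=
  (∑ i, (w.color i : ℕ)) + r * ∑ i ∈ DesSet w, ((i : ℕ) + 1)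

/-- The set of the first `t` letters of `w`. -/
def pref {n r m : ℕ} (w : CWord n r m) (t : ℕ) : Finset (Fin n) :=
  univ.filter fun a => ∃ l : Fin m, (l : ℕ) < t ∧ w.letter l = a

/-- The exponent `m_i = c_i - c_{i+1} + r·[i ∈ Des(g)]` (and `m_last = c_last`). -/
def mExp {n r m : ℕ} (w : CWord n r m) (i : Fin m) : ℕ :=
  (((w.color i : ℤ) - (if h : (i : ℕ) + 1 < m then (w.color ⟨(i : ℕ) + 1, h⟩ : ℤ) else 0))
    + (if i ∈ DesSet w then (r : ℤ) else 0)).toNat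

/-- The descent monomial `b̃_w`. -/
def btw {n r m : ℕ} (w : CWord n r m) : YRing n :=
  ∏ i : Fin m, Yv (pref w ((i : ℕ) + 1)) ^ mExp w i

/-- `b̃_{(g,d)} = b̃_g · Π_i y_{T_i}^{r d_i}`. -/
def btd {n r : ℕ} (g : CPerm n r) (d : Fin n → ℕ) : YRing n :=
  btw g * ∏ i : Fin n, Yv (pref g ((i : ℕ) + 1)) ^ (r * d i)

/-- `b̃_{(w,λ)} = b̃_w · Π_j y_{S_{λ_j}}^r` for a list `λ` of parts. -/
def btl {n r m : ℕ} (w : CWord n r m) (lam : List ℕ) : YRing n :=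
  btw w * (lam.map fun p => Yv (pref w p) ^ r).prod

/-- `r`-colored ordered set partitions of `[n]` with `k` blocks, encoded as pairs `(g, λ)`. -/
structure OPIdx (n k r : ℕ) where
  g : CPerm n r
  lam : List ℕ
  sorted : lam.Pairwise (· ≥ ·)
  pos : ∀ p ∈ lam, 1 ≤ p
  parts_le : ∀ p ∈ lam, p ≤ n - k
  len : lam.length + desNum g + 1 ≤ k

def btOP {n k r : ℕ} (o : OPIdx n k r) : YRing n := btl o.g o.lam

/-- `k`-dimensional `G_n`-faces, encoded as triples `(Z, w, λ)`. -/
structure FIdx (n k r : ℕ) where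
  Z : Finset (Fin n)
  cardZ : Z.card ≤ n - k
  w : CWord n r (n - Z.card)
  mem : ∀ j, w.letter j ∉ Z
  lam : List ℕ
  sorted : lam.Pairwise (· ≥ ·)
  pos : ∀ p ∈ lam, 1 ≤ p
  parts_le : ∀ p ∈ lam, p ≤ n - Z.card - k
  len : lam.length + desNum w + 1 ≤ k

/-- The monomial `b̃_{(Z,g,λ)}`. -/
def btF {n k r : ℕ} (f : FIdx n k r) : YRing n :=
  Yv f.Z ^ (k * r - (btl f.w f.lam).totalDegree) *
    ((∏ i : Fin (n - f.Z.card), Yv (pref f.w ((i : ℕ) + 1) ∪ f.Z) ^ mExp f.w i) *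
      (f.lam.map fun p => Yv (pref f.w p ∪ f.Z) ^ r).prod)

/-- The transfer map `φ : ℂ[y_S] → ℂ[x_n]`, `y_S ↦ Π_{i ∈ S} x_i`. -/
def phi (n : ℕ) : YRing n →ₐ[ℂ] XRing n := aeval fun S : NES n => ∏ i ∈ S.1, X i

/-- An element of `G(r,1,n)`: a permutation together with `r`-th roots of unity. -/
structure GElem (n r : ℕ) where
  perm : Equiv.Perm (Fin n)
  scalar : Fin n → ℂ
  root : ∀ i, scalar i ^ r = 1

/-- The action of `G(r,1,n)` on `ℂ[x_n]` by linear substitution. -/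
def actX {n r : ℕ} (g : GElem n r) : XRing n →ₐ[ℂ] XRing n :=
  aeval fun i => g.scalar i • X (g.perm i)

/-- The action of `G(r,1,n)` on `ℂ[y_S]`, `g · y_S = α · y_{g(S)}`. -/
def actY {n r : ℕ} (g : GElem n r) : YRing n →ₐ[ℂ] YRing n :=
  aeval fun S : NES n =>
    (∏ i ∈ S.1, g.scalar i) • X (⟨S.1.image g.perm, S.2.image _⟩ : NES n)

/-- An exponent vector is a multichain if its support is a chain of subsets. -/
def IsChainE {n : ℕ} (e : NES n →₀ ℕ) : Prop :=
  ∀ S ∈ e.support, ∀ T ∈ e.support, S.1 ⊆ T.1 ∨ T.1 ⊆ S.1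

/-- `μ(y)`: the multiset of sizes (with multiplicity) of a monomial with exponents `e`. -/
def muE {n : ℕ} (e : NES n →₀ ℕ) : Multiset ℕ :=
  e.sum fun S m => Multiset.replicate m S.1.card

/-- Sum of the `j` largest entries of a multiset of naturals. -/
def psum (a : Multiset ℕ) (j : ℕ) : ℕ := (((a.sort (· ≤ ·)).reverse).take j).sum

/-- Dominance order on partitions (encoded as multisets) of the same number. -/
def domLE (a b : Multiset ℕ) : Prop := a.sum = b.sum ∧ ∀ j, psum a j ≤ psum b j

/-- Strict dominance order. -/
def domLT (a b : Multiset ℕ) : Prop := domLE a b ∧ a ≠ b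

/-- Order on the variables: `y_S > y_T` iff `|S| > |T|`, or `|S| = |T|` and
`min (S \ T) < min (T \ S)`. -/
def varGt {n : ℕ} (S T : NES n) : Prop :=
  T.1.card < S.1.card ∨
    (S.1.card = T.1.card ∧ ∃ a ∈ S.1 \ T.1, ∀ b ∈ T.1 \ S.1, a < b)

/-- The graded lexicographic order on monomials (exponent vectors) of `ℂ[y_S]`. -/
def monLt {n : ℕ} (e f : NES n →₀ ℕ) : Prop :=
  (e.sum fun _ m => m) < (f.sum fun _ m => m) ∨
    ((e.sum fun _ m => m) = (f.sum fun _ m => m) ∧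
      ∃ S, e S < f S ∧ ∀ T, varGt T S → e T = f T)

/-- `e` is the leading monomial of `p`. -/
def IsLM {n : ℕ} (p : YRing n) (e : NES n →₀ ℕ) : Prop :=
  e ∈ p.support ∧ ∀ f ∈ p.support, f ≠ e → monLt f e

/-- The ideal of leading monomials of nonzero elements of `I`. -/
def LMideal {n : ℕ} (I : Ideal (YRing n)) : Ideal (YRing n) :=
  Ideal.span {q | ∃ p e, p ∈ I ∧ p ≠ 0 ∧ IsLM p e ∧ q = (monomial e 1 : YRing n)}

/-- `e_d(x_1^r, …, x_n^r)`. -/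
def esymmR (n r d : ℕ) : XRing n :=
  ∑ t ∈ (univ : Finset (Fin n)).powersetCard d, ∏ i ∈ t, X i ^ r

/-- The ideal `J_{n,k}` of Chan–Rhoades. -/
def Jx (n k r : ℕ) : Ideal (XRing n) :=
  Ideal.span ({p | ∃ i : Fin n, p = X i ^ (k * r)} ∪
    {p | ∃ d : ℕ, n - k + 1 ≤ d ∧ d ≤ n ∧ p = esymmR n r d})

/-- The ideal `I_{n,k}` of Chan–Rhoades. -/
def Ix (n k r : ℕ) : Ideal (XRing n) :=
  Ideal.span ({p | ∃ i : Fin n, p = X i ^ (k * r + 1)} ∪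
    {p | ∃ d : ℕ, n - k + 1 ≤ d ∧ d ≤ n ∧ p = esymmR n r d})

/-- A partition `μ` (with parts at most `n`) is non-admissible for threshold `N`
(`N = kr` for the `S`-case, `N = kr+1` for the `R`-case) if it has at least `N` parts or
at least `r` parts equal to `n`. -/
def NonAdm (n r N : ℕ) (μ : Multiset ℕ) : Prop :=
  N ≤ Multiset.card μ ∨ r ≤ μ.count n

/-- A partition `μ` is semi-admissible for threshold `N` if it has fewer than `N` parts and
at most `r - 1` parts equal to `n`, but some value `n-k+1 ≤ i ≤ n-1` occurs at least
`r + 1` times. -/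
def SemiAdm (n k r N : ℕ) (μ : Multiset ℕ) : Prop :=
  Multiset.card μ < N ∧ μ.count n ≤ r - 1 ∧
    ∃ i : ℕ, n - k + 1 ≤ i ∧ i ≤ n - 1 ∧ r + 1 ≤ μ.count i

/-! Write `m = φ(y^e)` with `e` a multichain. The exponent vector `f` of `m` is the conjugate
of the partition `μ(m)`, so dominance of partitions can be read off the sums
`∑ i, min (f i) j`. If `μ(m)` has at least `N` parts then `x_i ^ N ∣ m` for some `i`; if `[n]`
occurs `r` times in the chain then `e_n(x^r) = (x_1 ⋯ x_n)^r` divides `m`. If a set `S` of size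
`d` occurs more than `r` times, divide `m` by `∏_{i ∈ S} x_i^r` and multiply by `e_d(x^r)`: every
other term moves `r` units of exponent from indices in `S` to indices outside `S`, which carry
smaller exponents, and this strictly raises `μ` in dominance order. -/

variable {n : ℕ}

lemma Finsupp.finsetSum_single_apply {ι M : Type*} [DecidableEq ι] [AddCommMonoid M]
    (s : Finset ι) (m : M) (i : ι) :
    (∑ j ∈ s, Finsupp.single j m) i = if i ∈ s then m else 0 := by
  simp [Finsupp.finsetSum_apply, Finsupp.single_apply]

lemma prod_X_pow_eq_monomial_sum {σ R : Type*} [CommSemiring R] (s : Finset σ) (m : ℕ) :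
    ∏ i ∈ s, (X i ^ m : MvPolynomial σ R) = monomial (∑ i ∈ s, Finsupp.single i m) 1 := by
  simp only [X_pow_eq_monomial, monomial_sum_one]

lemma monomial_mem_of_le {σ R : Type*} [CommSemiring R] {I : Ideal (MvPolynomial σ R)}
    {a b : σ →₀ ℕ} (ha : monomial a 1 ∈ I) (hab : a ≤ b) : monomial b (1 : R) ∈ I :=
  I.mem_of_dvd (monomial_dvd_monomial.2 ⟨Or.inr hab, one_dvd _⟩) ha

def xExp : (NES n →₀ ℕ) →+ (Fin n →₀ ℕ) :=
  Finsupp.liftAddHom fun S => ∑ i ∈ S.1, Finsupp.singleAddHom i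

lemma xExp_eq_sum (e : NES n →₀ ℕ) :
    xExp e = ∑ S ∈ e.support, ∑ i ∈ S.1, Finsupp.single i (e S) := by
  simp [xExp, Finsupp.liftAddHom_apply, Finsupp.sum]

lemma xExp_single (S : NES n) (m : ℕ) :
    xExp (Finsupp.single S m) = ∑ i ∈ S.1, Finsupp.single i m := by
  simp [xExp]

lemma xExp_apply (e : NES n →₀ ℕ) (i : Fin n) :
    xExp e i = ∑ S ∈ e.support, if i ∈ S.1 then e S else 0 := by
  simp only [xExp_eq_sum, Finsupp.finsetSum_apply, ← Finsupp.finsetSum_single_apply]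

lemma phi_monomial (e : NES n →₀ ℕ) : phi n (monomial e 1) = monomial (xExp e) 1 := by
  rw [phi, aeval_monomial, map_one, one_mul, xExp_eq_sum, monomial_sum_one, Finsupp.prod]
  simp only [← Finset.prod_pow, prod_X_pow_eq_monomial_sum]

lemma muE_add (a b : NES n →₀ ℕ) : muE (a + b) = muE a + muE b :=
  Finsupp.sum_add_index' (by simp) fun _ _ _ => Multiset.replicate_add _ _ _

lemma muE_single (S : NES n) (m : ℕ) :
    muE (Finsupp.single S m) = Multiset.replicate m S.1.card :=
  Finsupp.sum_single_index (Multiset.replicate_zero _)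

lemma card_muE (e : NES n →₀ ℕ) : Multiset.card (muE e) = ∑ S ∈ e.support, e S := by
  simp [muE, Finsupp.sum]

lemma count_muE (e : NES n →₀ ℕ) (d : ℕ) :
    (muE e).count d = ∑ S ∈ e.support, if S.1.card = d then e S else 0 := by
  simp [muE, Finsupp.sum, Multiset.count_sum', Multiset.count_replicate, eq_comm]

lemma sum_muE (e : NES n →₀ ℕ) : (muE e).sum = ∑ i, xExp e i := by
  induction e using Finsupp.induction with
  | zero => simp [muE]
  | single_add S m e _ _ ih =>
    simp only [muE_add, muE_single, Multiset.sum_add, Multiset.sum_replicate, ih, map_add,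
      xExp_single, Finsupp.add_apply, Finset.sum_add_distrib, Finsupp.finsetSum_apply]
    rw [Finset.sum_comm]
    simp [Finsupp.univ_sum_single_apply, mul_comm]

lemma Multiset.sort_add_replicate {a : Multiset ℕ} {v : ℕ} (hv : ∀ x ∈ a, x ≤ v) (m : ℕ) :
    (a + Multiset.replicate m v).sort (· ≤ ·) = a.sort (· ≤ ·) ++ List.replicate m v := by
  refine List.Perm.eq_of_pairwise' (r := (· ≤ ·)) (Multiset.pairwise_sort _ _) ?_ ?_
  · rw [List.pairwise_append]
    refine ⟨Multiset.pairwise_sort _ _, List.pairwise_replicate.2 (Or.inr le_rfl), ?_⟩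
    intro x hx y hy
    rw [List.eq_of_mem_replicate hy]
    exact hv x ((Multiset.mem_sort _).1 hx)
  · rw [← Multiset.coe_eq_coe, ← Multiset.coe_add, Multiset.sort_eq, Multiset.sort_eq,
      Multiset.coe_replicate]

lemma psum_add_replicate {a : Multiset ℕ} {v : ℕ} (hv : ∀ x ∈ a, x ≤ v) (m j : ℕ) :
    _root_.psum (a + Multiset.replicate m v) j = v * min j m + _root_.psum a (j - m) := by
  simp only [_root_.psum, Multiset.sort_add_replicate hv, List.reverse_append,
    List.reverse_replicate, List.take_append, List.take_replicate, List.sum_append,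
    List.sum_replicate, List.length_replicate, smul_eq_mul]
  ring

lemma count_muE_le_xExp (e : NES n →₀ ℕ) (i : Fin n) : (muE e).count n ≤ xExp e i := by
  rw [count_muE, xExp_apply]
  refine Finset.sum_le_sum fun S _ => ?_
  split_ifs with hS hi
  · exact le_rfl
  · have hS : S.1 = Finset.univ := Finset.card_eq_iff_eq_univ _ |>.1 (by simpa using hS)
    exact absurd (hS ▸ Finset.mem_univ i) hi
  all_goals exact Nat.zero_le _

namespace IsChainE

variable {e : NES n →₀ ℕ}

lemma subset_of_card_le (he : IsChainE e) {S T : NES n} (hS : S ∈ e.support)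
    (hT : T ∈ e.support) (h : S.1.card ≤ T.1.card) : S.1 ⊆ T.1 :=
  (he S hS T hT).elim id fun hTS => (Finset.eq_of_subset_of_card_le hTS h).ge

lemma erase (he : IsChainE e) (M : NES n) : IsChainE (e.erase M) := by
  simp only [IsChainE, Finsupp.support_erase] at he ⊢
  exact fun S hS T hT => he S (Finset.mem_of_mem_erase hS) T (Finset.mem_of_mem_erase hT)

lemma induction_top {motive : (NES n →₀ ℕ) → Prop} (zero : motive 0)
    (add_top : ∀ e M m, (∀ U ∈ e.support, U.1 ⊆ M.1) → motive e →
      motive (e + Finsupp.single M m))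
    (he : IsChainE e) : motive e := by
  induction hN : e.support.card using Nat.strong_induction_on generalizing e with
  | _ N ih =>
  obtain h | ⟨M, hM, hmax⟩ := e.support.eq_empty_or_nonempty.imp Finsupp.support_eq_empty.1
    (Finset.exists_max_image _ fun S : NES n => S.1.card)
  · exact h ▸ zero
  rw [← Finsupp.erase_add_single M e]
  refine add_top _ M _ (fun U hU => ?_) (ih _ ?_ (he.erase M) rfl)
  · rw [Finsupp.support_erase] at hU
    have hU := Finset.mem_of_mem_erase hU
    exact he.subset_of_card_le hU hM (hmax U hU)
  · rw [Finsupp.support_erase, Finset.card_erase_of_mem hM]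
    have := Finset.card_pos.2 ⟨M, hM⟩
    omega


/-- The exponents of `φ(y^e)` form the conjugate partition of `μ(e)`. -/
lemma psum_muE (he : IsChainE e) (j : ℕ) : _root_.psum (muE e) j = ∑ i, min (xExp e i) j := by
  refine he.induction_top (motive := fun e => ∀ j, _root_.psum (muE e) j = ∑ i, min (xExp e i) j)
    (by simp [_root_.psum, muE]) (fun e M m hsub ih j => ?_) j
  have hv : ∀ x ∈ muE e, x ≤ M.1.card := by
    intro x hx
    obtain ⟨U, hU, hx⟩ := Multiset.mem_sum.1 hx
    exact Multiset.eq_of_mem_replicate hx ▸ Finset.card_le_card (hsub U hU)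
  have hout : ∀ i ∉ M.1, xExp e i = 0 := fun i hi => by
    rw [xExp_apply]
    exact Finset.sum_eq_zero fun U hU => if_neg fun h => hi (hsub U hU h)
  have hmin : ∀ i, min (xExp (e + Finsupp.single M m) i) j
      = (if i ∈ M.1 then min j m else 0) + min (xExp e i) (j - m) := by
    intro i
    rw [map_add, Finsupp.add_apply, xExp_single, Finsupp.finsetSum_single_apply]
    by_cases hi : i ∈ M.1
    · simp only [if_pos hi]; omega
    · simp [hi, hout i hi]
  simp only [muE_add, muE_single, psum_add_replicate hv, ih, hmin, Finset.sum_add_distrib,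
    Finset.sum_ite_mem, Finset.univ_inter, Finset.sum_const, smul_eq_mul]

lemma exists_count_muE_eq (he : IsChainE e) {d : ℕ} (hd : (muE e).count d ≠ 0) :
    ∃ S ∈ e.support, S.1.card = d ∧ (muE e).count d = e S := by
  rw [count_muE, ← Finset.sum_filter] at hd ⊢
  obtain ⟨S, hS⟩ := Finset.nonempty_of_sum_ne_zero hd
  obtain ⟨hSe, hSd⟩ := Finset.mem_filter.1 hS
  have hunique : e.support.filter (fun U => U.1.card = d) = {S} := by
    refine Finset.eq_singleton_iff_unique_mem.2 ⟨hS, fun T hT => ?_⟩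
    obtain ⟨hTe, hTd⟩ := Finset.mem_filter.1 hT
    exact Subtype.ext <| (he.subset_of_card_le hTe hSe (by omega)).antisymm
      (he.subset_of_card_le hSe hTe (by omega))
  exact ⟨S, hSe, hSd, by rw [hunique, Finset.sum_singleton]⟩

lemma exists_card_muE_le_xExp (he : IsChainE e) (hn : 0 < n) :
    ∃ i, Multiset.card (muE e) ≤ xExp e i := by
  obtain h | ⟨S, hS, hmin⟩ := e.support.eq_empty_or_nonempty.imp Finsupp.support_eq_empty.1
    (Finset.exists_min_image _ fun S : NES n => S.1.card)
  · exact ⟨⟨0, hn⟩, by simp [h, muE]⟩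
  obtain ⟨i, hi⟩ := S.2
  refine ⟨i, ?_⟩
  rw [card_muE, xExp_apply]
  exact Finset.sum_le_sum fun U hU =>
    (if_pos (he.subset_of_card_le hS hU (hmin U hU) hi)).ge

lemma exists_gap (he : IsChainE e) {S : NES n} (hS : S ∈ e.support) :
    ∃ c, (∀ a ∈ S.1, e S + c ≤ xExp e a) ∧ ∀ b ∉ S.1, xExp e b ≤ c := by
  refine ⟨∑ U ∈ e.support, if U.1 ⊆ S.1 then 0 else e U, fun a ha => ?_, fun b hb => ?_⟩
  · rw [xExp_apply, ← Finset.add_sum_erase _ _ hS, ← Finset.add_sum_erase _ _ hS,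
      if_pos subset_rfl, if_pos ha, zero_add]
    refine Nat.add_le_add_left (Finset.sum_le_sum fun U hU => ?_) _
    have hU := Finset.mem_of_mem_erase hU
    have hsup : ¬ U.1 ⊆ S.1 → a ∈ U.1 := fun h => (he U hU S hS).resolve_left h ha
    split_ifs <;> simp_all
  · rw [xExp_apply]
    refine Finset.sum_le_sum fun U _ => ?_
    have hsub : b ∈ U.1 → ¬ U.1 ⊆ S.1 := fun h h' => hb (h' h)
    split_ifs <;> simp_all

end IsChainE

/-- `y_F` as an exponent vector, zero when `F = ∅`. -/
def singleNES (F : Finset (Fin n)) : NES n →₀ ℕ :=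
  if h : F.Nonempty then Finsupp.single ⟨F, h⟩ 1 else 0

lemma xExp_singleNES (F : Finset (Fin n)) : xExp (singleNES F) = ∑ i ∈ F, Finsupp.single i 1 := by
  unfold singleNES
  split_ifs with h
  · exact xExp_single _ _
  · simp [Finset.not_nonempty_iff_eq_empty.1 h]

lemma eq_of_mem_support_singleNES {F : Finset (Fin n)} {S : NES n}
    (hS : S ∈ (singleNES F).support) : S.1 = F := by
  unfold singleNES at hS
  split_ifs at hS
  · rw [Finsupp.support_single _ one_ne_zero, Finset.mem_singleton] at hS
    rw [hS]
  · simp at hS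

def chainOf (f : Fin n →₀ ℕ) : NES n →₀ ℕ :=
  ∑ l ∈ Finset.Icc 1 (∑ i, f i), singleNES {i | l ≤ f i}

lemma isChainE_chainOf (f : Fin n →₀ ℕ) : IsChainE (chainOf f) := by
  have hlevel : ∀ S ∈ (chainOf f).support, ∃ l, S.1 = ({i | l ≤ f i} : Finset (Fin n)) := by
    intro S hS
    obtain ⟨l, -, hl⟩ := Finset.mem_biUnion.1 (Finsupp.support_finsetSum hS)
    exact ⟨l, eq_of_mem_support_singleNES hl⟩
  intro S hS T hT
  obtain ⟨l, hl⟩ := hlevel S hS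
  obtain ⟨l', hl'⟩ := hlevel T hT
  rw [hl, hl']
  rcases le_total l l' with h | h
  all_goals simp only [Finset.subset_iff, Finset.mem_filter, Finset.mem_univ, true_and]
  · exact Or.inr fun i hi => by omega
  · exact Or.inl fun i hi => by omega

lemma xExp_chainOf (f : Fin n →₀ ℕ) : xExp (chainOf f) = f := by
  ext i
  have hfi : f i ≤ ∑ j, f j :=
    Finset.single_le_sum (fun j _ => Nat.zero_le (f j)) (Finset.mem_univ i)
  simp only [chainOf, map_sum, xExp_singleNES, Finsupp.finsetSum_apply, Finsupp.single_apply,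
    Finset.sum_ite_eq', Finset.mem_filter, Finset.mem_univ, true_and]
  rw [Finset.sum_boole, Nat.cast_id]
  have : {l ∈ Finset.Icc 1 (∑ j, f j) | l ≤ f i} = Finset.Icc 1 (f i) := by
    ext l
    simp only [Finset.mem_filter, Finset.mem_Icc]
    omega
  rw [this, Nat.card_Icc, Nat.add_sub_cancel]

section Exchange

/-! `f'` arises from `f` by moving `r` units of exponent from the indices in `S` to those in `T`:
hypothesis `hf'` says `f' = f - r • 1_S + r • 1_T`. -/

variable {ι : Type*} [DecidableEq ι] {f f' : ι → ℕ} {S T : Finset ι} {r c : ℕ}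

lemma sum_eq_of_exchange [Fintype ι] (hcard : S.card = T.card)
    (hf' : ∀ i, f' i + (if i ∈ S then r else 0) = f i + (if i ∈ T then r else 0)) :
    ∑ i, f' i = ∑ i, f i := by
  have h := Finset.sum_congr (s₁ := Finset.univ) rfl fun i _ => hf' i
  simp only [Finset.sum_add_distrib, Finset.sum_ite_mem, Finset.univ_inter, Finset.sum_const,
    smul_eq_mul, hcard] at h
  omega

/-- By concavity of `min · j`, each index gains at least what the constant weights lose. -/
lemma min_add_le_of_exchange (hS : ∀ a ∈ S, c + r ≤ f a) (hSc : ∀ b ∉ S, f b ≤ c)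
    (hf' : ∀ i, f' i + (if i ∈ S then r else 0) = f i + (if i ∈ T then r else 0))
    (j : ℕ) (i : ι) :
    min (f i) j + ((if i ∈ S then min c j else 0) + (if i ∈ T then min (c + r) j else 0)) ≤
      min (f' i) j + ((if i ∈ S then min (c + r) j else 0) + (if i ∈ T then min c j else 0)) := by
  have := hf' i
  by_cases hiS : i ∈ S
  · have := hS i hiS
    by_cases hiT : i ∈ T <;> simp only [hiS, hiT, if_true, if_false] at * <;> omega
  · have := hSc i hiS
    by_cases hiT : i ∈ T <;> simp only [hiS, hiT, if_true, if_false] at * <;> omega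

lemma sum_min_le_of_exchange [Fintype ι] (hcard : S.card = T.card) (hS : ∀ a ∈ S, c + r ≤ f a)
    (hSc : ∀ b ∉ S, f b ≤ c)
    (hf' : ∀ i, f' i + (if i ∈ S then r else 0) = f i + (if i ∈ T then r else 0)) (j : ℕ) :
    ∑ i, min (f i) j ≤ ∑ i, min (f' i) j := by
  have h := Finset.sum_le_sum fun i (_ : i ∈ Finset.univ) =>
    min_add_le_of_exchange hS hSc hf' j i
  simp only [Finset.sum_add_distrib, Finset.sum_ite_mem, Finset.univ_inter, Finset.sum_const,
    smul_eq_mul, hcard] at h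
  omega

lemma sum_min_lt_of_exchange [Fintype ι] (hr : 1 ≤ r) (hcard : S.card = T.card)
    (hS : ∀ a ∈ S, c + r + 1 ≤ f a) (hSc : ∀ b ∉ S, f b ≤ c)
    (hf' : ∀ i, f' i + (if i ∈ S then r else 0) = f i + (if i ∈ T then r else 0))
    {a : ι} (ha : a ∈ S) (haT : a ∉ T) :
    ∑ i, min (f i) (c + 1) < ∑ i, min (f' i) (c + 1) := by
  have key := min_add_le_of_exchange (fun a ha => by have := hS a ha; omega) hSc hf' (c + 1)
  have h := Finset.sum_lt_sum (fun i (_ : i ∈ Finset.univ) => key i) ⟨a, Finset.mem_univ a, by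
    have := hf' a
    have := hS a ha
    simp only [ha, haT, if_true, if_false] at *
    omega⟩
  simp only [Finset.sum_add_distrib, Finset.sum_ite_mem, Finset.univ_inter, Finset.sum_const,
    smul_eq_mul, hcard] at h
  omega

end Exchange

lemma domLT_muE_of_sum_min {e e' : NES n →₀ ℕ} (he : IsChainE e) (he' : IsChainE e')
    (hsum : ∑ i, xExp e i = ∑ i, xExp e' i)
    (hle : ∀ j, ∑ i, min (xExp e i) j ≤ ∑ i, min (xExp e' i) j) {j : ℕ}
    (hlt : ∑ i, min (xExp e i) j < ∑ i, min (xExp e' i) j) : domLT (muE e) (muE e') :=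
  ⟨⟨by rw [sum_muE, sum_muE, hsum], fun j => by rw [he.psum_muE, he'.psum_muE]; exact hle j⟩,
    fun h => hlt.ne (by rw [← he.psum_muE, ← he'.psum_muE, h])⟩

lemma domLT_chainOf_of_exchange {e : NES n →₀ ℕ} {f' : Fin n →₀ ℕ} {S T : Finset (Fin n)}
    {r c : ℕ} (hr : 1 ≤ r) (he : IsChainE e) (hcard : S.card = T.card) (hST : S ≠ T)
    (hS : ∀ a ∈ S, c + r + 1 ≤ xExp e a) (hSc : ∀ b ∉ S, xExp e b ≤ c)
    (hf' : ∀ i, f' i + (if i ∈ S then r else 0) = xExp e i + (if i ∈ T then r else 0)) :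
    domLT (muE e) (muE (chainOf f')) := by
  obtain ⟨a, ha, haT⟩ : ∃ a ∈ S, a ∉ T :=
    Finset.not_subset.1 fun h => hST (Finset.eq_of_subset_of_card_le h hcard.ge)
  refine domLT_muE_of_sum_min he (isChainE_chainOf _) ?_ ?_ (j := c + 1) ?_ <;>
    rw [xExp_chainOf]
  · exact (sum_eq_of_exchange hcard hf').symm
  · exact sum_min_le_of_exchange hcard (fun a ha => by have := hS a ha; omega) hSc hf'
  · exact sum_min_lt_of_exchange hr hcard hS hSc hf' ha haT

lemma esymmR_eq_sum_monomial (n r d : ℕ) :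
    esymmR n r d = ∑ T ∈ (Finset.univ : Finset (Fin n)).powersetCard d,
      monomial (∑ i ∈ T, Finsupp.single i r) 1 := by
  simp only [esymmR, prod_X_pow_eq_monomial_sum]

lemma esymmR_self (n r : ℕ) : esymmR n r n = monomial (∑ i, Finsupp.single i r) 1 := by
  have h : (Finset.univ : Finset (Fin n)).powersetCard n = {Finset.univ} := by
    simpa using Finset.powersetCard_self (Finset.univ : Finset (Fin n))
  rw [esymmR_eq_sum_monomial, h, Finset.sum_singleton]

lemma monomial_xExp_mem_of_nonAdm {I : Ideal (XRing n)} {r N : ℕ} {e : NES n →₀ ℕ}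
    (hn : 0 < n) (he : IsChainE e) (hX : ∀ i : Fin n, X i ^ N ∈ I) (hI : N ≤ r ∨ esymmR n r n ∈ I)
    (h : NonAdm n r N (muE e)) : monomial (xExp e) 1 ∈ I := by
  have hXle : ∀ i, N ≤ xExp e i → monomial (xExp e) 1 ∈ I := fun i hi =>
    monomial_mem_of_le (by rw [← X_pow_eq_monomial]; exact hX i) (Finsupp.single_le_iff.2 hi)
  rcases h with hcard | hcount
  · obtain ⟨i, hi⟩ := he.exists_card_muE_le_xExp hn
    exact hXle i (hcard.trans hi)
  have hr : ∀ i, r ≤ xExp e i := fun i => hcount.trans (count_muE_le_xExp e i)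
  rcases hI with hN | hE
  · exact hXle ⟨0, hn⟩ (hN.trans (hr _))
  · refine monomial_mem_of_le (by rwa [← esymmR_self]) fun i => ?_
    simpa [Finsupp.finsetSum_single_apply] using hr i

def dominatingSpan (μ : Multiset ℕ) : Submodule ℂ (XRing n) :=
  Submodule.span ℂ {m | ∃ (f' : Fin n →₀ ℕ) (e' : NES n →₀ ℕ), IsChainE e' ∧
    phi n (monomial e' 1) = (monomial f' 1 : XRing n) ∧ domLT μ (muE e') ∧ m = monomial f' 1}

lemma monomial_mem_dominatingSpan {μ : Multiset ℕ} {f : Fin n →₀ ℕ}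
    (h : domLT μ (muE (chainOf f))) : monomial f 1 ∈ dominatingSpan μ :=
  Submodule.subset_span ⟨f, chainOf f, isChainE_chainOf f, by rw [phi_monomial, xExp_chainOf],
    h, rfl⟩

lemma exists_sub_mem_span_esymmR_of_count {r d : ℕ} {e : NES n →₀ ℕ} (hr : 1 ≤ r)
    (he : IsChainE e) (hcount : r + 1 ≤ (muE e).count d) :
    ∃ q ∈ dominatingSpan (muE e), monomial (xExp e) 1 - q ∈ Ideal.span {esymmR n r d} := by
  obtain ⟨S, hS, hSd, hcS⟩ := he.exists_count_muE_eq (d := d) (by omega)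
  obtain ⟨c, hSc, hc⟩ := he.exists_gap hS
  set ind : Finset (Fin n) → Fin n →₀ ℕ := fun T => ∑ i ∈ T, Finsupp.single i r
  set g := xExp e - ind S.1
  have hg : ∀ T i,
      (g + ind T) i + (if i ∈ S.1 then r else 0) = xExp e i + (if i ∈ T then r else 0) := by
    intro T i
    simp only [g, ind, Finsupp.add_apply, Finsupp.tsub_apply, Finsupp.finsetSum_single_apply]
    by_cases hi : i ∈ S.1
    · have := hSc i hi
      split_ifs <;> omega
    · split_ifs <;> omega
  have hgS : g + ind S.1 = xExp e := by
    ext i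
    have := hg S.1 i
    rw [Finsupp.add_apply] at this ⊢
    omega
  set P := (Finset.univ : Finset (Fin n)).powersetCard d
  have hSP : S.1 ∈ P := Finset.mem_powersetCard.2 ⟨Finset.subset_univ _, hSd⟩
  have hdom : ∀ T ∈ P.erase S.1, monomial (g + ind T) 1 ∈ dominatingSpan (muE e) := by
    intro T hT
    obtain ⟨hTS, hTP⟩ := Finset.mem_erase.1 hT
    refine monomial_mem_dominatingSpan (domLT_chainOf_of_exchange hr he ?_ hTS.symm
      (fun a ha => by have := hSc a ha; omega) hc (hg T))
    rw [hSd, (Finset.mem_powersetCard.1 hTP).2]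
  refine ⟨-∑ T ∈ P.erase S.1, monomial (g + ind T) 1, neg_mem (sum_mem hdom), ?_⟩
  have hexpand : monomial g 1 * esymmR n r d
      = monomial (xExp e) 1 + ∑ T ∈ P.erase S.1, monomial (g + ind T) 1 := by
    rw [esymmR_eq_sum_monomial, Finset.mul_sum, ← Finset.add_sum_erase _ _ hSP]
    simp only [monomial_mul, one_mul, ind, hgS]
  rw [sub_neg_eq_add, ← hexpand]
  exact Ideal.mul_mem_left _ _ (Ideal.subset_span rfl)

theorem xmonomial_nonadmissible_semiadmissible_general (n k r : ℕ) (hr : 1 ≤ r) (hn : 1 ≤ n)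
    (f : Fin n →₀ ℕ) (e : NES n →₀ ℕ) (he : IsChainE e)
    (hfe : phi n (monomial e 1) = (monomial f 1 : XRing n)) :
    ((NonAdm n r (k * r) (muE e) → (monomial f 1 : XRing n) ∈ Jx n k r) ∧
     (NonAdm n r (k * r + 1) (muE e) → (monomial f 1 : XRing n) ∈ Ix n k r)) ∧
    ((SemiAdm n k r (k * r) (muE e) →
        ∃ q ∈ Submodule.span ℂ {m : XRing n | ∃ (f' : Fin n →₀ ℕ) (e' : NES n →₀ ℕ),
            IsChainE e' ∧ phi n (monomial e' 1) = (monomial f' 1 : XRing n) ∧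
            domLT (muE e) (muE e') ∧ m = monomial f' 1},
          (monomial f 1 : XRing n) - q ∈ Jx n k r) ∧
     (SemiAdm n k r (k * r + 1) (muE e) →
        ∃ q ∈ Submodule.span ℂ {m : XRing n | ∃ (f' : Fin n →₀ ℕ) (e' : NES n →₀ ℕ),
            IsChainE e' ∧ phi n (monomial e' 1) = (monomial f' 1 : XRing n) ∧
            domLT (muE e) (muE e') ∧ m = monomial f' 1},
          (monomial f 1 : XRing n) - q ∈ Ix n k r)) := by
  obtain rfl : f = xExp e :=
    monomial_left_injective one_ne_zero (hfe.symm.trans (phi_monomial e))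
  have hnonadm : ∀ N, (k = 0 → N ≤ r) → NonAdm n r N (muE e) → monomial (xExp e) 1 ∈
      Ideal.span ({p : XRing n | ∃ i : Fin n, p = X i ^ N} ∪
        {p | ∃ d : ℕ, n - k + 1 ≤ d ∧ d ≤ n ∧ p = esymmR n r d}) := by
    refine fun N hN => monomial_xExp_mem_of_nonAdm hn he
      (fun i => Ideal.subset_span (Or.inl ⟨i, rfl⟩)) ?_
    rcases Nat.eq_zero_or_pos k with hk | hk
    · exact Or.inl (hN hk)
    · exact Or.inr (Ideal.subset_span (Or.inr ⟨n, by omega, le_rfl, rfl⟩))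
  have hsemi : ∀ N, SemiAdm n k r N (muE e) → ∃ q ∈ dominatingSpan (muE e),
      monomial (xExp e) 1 - q ∈
        Ideal.span {p : XRing n | ∃ d : ℕ, n - k + 1 ≤ d ∧ d ≤ n ∧ p = esymmR n r d} := by
    rintro N ⟨-, -, d, hd, hdn, hcount⟩
    obtain ⟨q, hq, hmem⟩ := exists_sub_mem_span_esymmR_of_count hr he hcount
    refine ⟨q, hq, (Ideal.span_singleton_le_iff_mem _).2 ?_ hmem⟩
    exact Ideal.subset_span ⟨d, hd, by omega, rfl⟩
  refine ⟨⟨hnonadm _ fun hk => by simp [hk], hnonadm _ fun hk => by simp [hk, hr]⟩,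
    fun h => ?_, fun h => ?_⟩ <;>
  · obtain ⟨q, hq, hmem⟩ := hsemi _ h
    exact ⟨q, hq, Ideal.span_mono Set.subset_union_right hmem⟩

/-- Let `m = x^f` be a monomial of `ℂ[x_n]` with `μ(m) = μ(e)` for the
unique multichain exponent `e` with `φ(y^e) = x^f`. (1) If `μ(m)` is non-admissible then
`m` lies in `J_{n,k}` (resp. `I_{n,k}`). (2) If `μ(m)` is semi-admissible then, modulo
`J_{n,k}` (resp. `I_{n,k}`), `m` is a `ℂ`-linear combination of monomials `m_α` with
`μ(m_α) ▷ μ(m)`. -/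
theorem xmonomial_nonadmissible_semiadmissible (n k r : ℕ) (hr : 1 ≤ r) (hn : 1 ≤ n)
    (hk : k ≤ n) (f : Fin n →₀ ℕ) (e : NES n →₀ ℕ) (he : IsChainE e)
    (hfe : phi n (monomial e 1) = (monomial f 1 : XRing n)) :
    ((NonAdm n r (k * r) (muE e) → (monomial f 1 : XRing n) ∈ Jx n k r) ∧
     (NonAdm n r (k * r + 1) (muE e) → (monomial f 1 : XRing n) ∈ Ix n k r)) ∧
    ((SemiAdm n k r (k * r) (muE e) →
        ∃ q ∈ Submodule.span ℂ {m : XRing n | ∃ (f' : Fin n →₀ ℕ) (e' : NES n →₀ ℕ),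
            IsChainE e' ∧ phi n (monomial e' 1) = (monomial f' 1 : XRing n) ∧
            domLT (muE e) (muE e') ∧ m = monomial f' 1},
          (monomial f 1 : XRing n) - q ∈ Jx n k r) ∧
     (SemiAdm n k r (k * r + 1) (muE e) →
        ∃ q ∈ Submodule.span ℂ {m : XRing n | ∃ (f' : Fin n →₀ ℕ) (e' : NES n →₀ ℕ),
            IsChainE e' ∧ phi n (monomial e' 1) = (monomial f' 1 : XRing n) ∧
            domLT (muE e) (muE e') ∧ m = monomial f' 1},
          (monomial f 1 : XRing n) - q ∈ Ix n k r)) :=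
  xmonomial_nonadmissible_semiadmissible_general n k r hr hn f e he hfe

end
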